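/- arXiv:2208.08452 — 6 statements merged into one kernel-verified Lean document; each statement's English description precedes it below -/
import Mathlib

section
/- For any nonnegative integer n, the central binomial coefficient C(n, n/2) (taken to be 0 when n is odd) equals the integral over x from -2 to 2 of x^n / (π √(4 - x²)) dx. -/
/-!
Substituting `x = 2 cos θ` turns the integral into `2 ^ n / π * ∫ θ in 0..π, cos θ ^ n`. By the
reduction formula for `∫ cos ^ n`, these values satisfy `(n + 2) a (n + 2) = 4 (n + 1) a n`, which
is also the recurrence of the central binomial coefficients (and of `0` in odd degrees); the initial
values `1` and `0` agree.
-/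

open intervalIntegral Real

theorem image_const_mul_cos_Ioo {r : ℝ} (hr : 0 < r) :
    (fun θ ↦ r * cos θ) '' Set.Ioo 0 π = Set.Ioo (-r) r := by
  have hcos : cos '' Set.Ioo 0 π = Set.Ioo (-1) 1 := by
    simpa using cosPartialHomeomorph.image_source_eq_target
  rw [← Set.image_image (r * ·), hcos, Set.image_mul_left_Ioo hr]
  simp

theorem integral_div_sqrt_sq_sub_sq {r : ℝ} (hr : 0 < r) (f : ℝ → ℝ) :
    ∫ x in -r..r, f x / √(r ^ 2 - x ^ 2) = ∫ θ in 0..π, f (r * cos θ) := by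
  have hderiv : ∀ θ ∈ Set.Ioo 0 π,
      HasDerivWithinAt (fun θ ↦ r * cos θ) (r * -sin θ) (Set.Ioo 0 π) θ :=
    fun θ _ ↦ ((hasDerivAt_cos θ).const_mul r).hasDerivWithinAt
  have hinj : Set.InjOn (fun θ ↦ r * cos θ) (Set.Ioo 0 π) :=
    fun a ha b hb hab ↦ cosPartialHomeomorph.injOn ha hb (mul_left_cancel₀ hr.ne' hab)
  rw [integral_of_le (by linarith), integral_of_le pi_pos.le,
    MeasureTheory.integral_Ioc_eq_integral_Ioo, MeasureTheory.integral_Ioc_eq_integral_Ioo,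
    ← image_const_mul_cos_Ioo hr,
    MeasureTheory.integral_image_eq_integral_abs_deriv_smul measurableSet_Ioo hderiv hinj]
  refine MeasureTheory.setIntegral_congr_fun measurableSet_Ioo fun θ ⟨h0, hπ⟩ ↦ ?_
  have hsin : 0 < sin θ := sin_pos_of_pos_of_lt_pi h0 hπ
  have hsqrt : √(r ^ 2 - (r * cos θ) ^ 2) = r * sin θ := by
    rw [← sqrt_sq (by positivity : 0 ≤ r * sin θ)]
    congr 1
    linear_combination -r ^ 2 * sin_sq_add_cos_sq θ
  rw [hsqrt, abs_of_neg (by nlinarith), smul_eq_mul]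
  field_simp

theorem integral_pow_div_pi_mul_sqrt_four_sub_sq (n : ℕ) :
    ∫ x in (-2 : ℝ)..2, x ^ n / (π * √(4 - x ^ 2)) = 2 ^ n / π * ∫ θ in 0..π, cos θ ^ n := by
  have h := integral_div_sqrt_sq_sub_sq two_pos (· ^ n)
  norm_num at h
  simp only [div_mul_eq_div_div_swap, intervalIntegral.integral_div, h, mul_pow,
    intervalIntegral.integral_const_mul]
  ring

theorem integral_cos_pow_add_two_zero_pi (n : ℕ) :
    ∫ θ in 0..π, cos θ ^ (n + 2) = (n + 1) / (n + 2) * ∫ θ in 0..π, cos θ ^ n := by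
  simp [integral_cos_pow]

theorem cast_choose_add_two_half {n : ℕ} (hn : Even n) :
    ((n + 2).choose ((n + 2) / 2) : ℝ) = 4 * (n + 1) / (n + 2) * n.choose (n / 2) := by
  obtain ⟨k, rfl⟩ := hn
  have hrec : ((k : ℝ) + 1) * (k + 1).centralBinom = 2 * (2 * k + 1) * k.centralBinom := by
    exact_mod_cast Nat.succ_mul_centralBinom_succ k
  rw [show k + k + 2 = 2 * (k + 1) by ring, ← two_mul, Nat.mul_div_cancel_left _ two_pos,
    Nat.mul_div_cancel_left _ two_pos, ← Nat.centralBinom_eq_two_mul_choose,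
    ← Nat.centralBinom_eq_two_mul_choose]
  push_cast
  field_simp
  linear_combination 2 * hrec

theorem ite_even_choose_half_add_two (n : ℕ) :
    (if Even (n + 2) then ((n + 2).choose ((n + 2) / 2) : ℝ) else 0) =
      4 * (n + 1) / (n + 2) * if Even n then (n.choose (n / 2) : ℝ) else 0 := by
  by_cases hn : Even n
  · rw [if_pos (hn.add even_two), if_pos hn, cast_choose_add_two_half hn]
  · rw [if_neg (by simpa [Nat.even_add] using hn), if_neg hn, mul_zero]

theorem central_binom_integral (n : ℕ) :
    (if Even n then ((n.choose (n / 2) : ℝ)) else 0) =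
      ∫ x in (-2 : ℝ)..2, x ^ n / (Real.pi * Real.sqrt (4 - x ^ 2)) := by
  rw [integral_pow_div_pi_mul_sqrt_four_sub_sq]
  induction n using Nat.twoStepInduction with
  | zero => simp [pi_ne_zero]
  | one => simp
  | more n ih _ =>
    rw [ite_even_choose_half_add_two, ih, integral_cos_pow_add_two_zero_pi]
    field_simp
    ring
end

section
/- For any nonnegative integer n, the binomial coefficient C(n, (n+1)/2) (taken to be 0 when n is even) equals the integral over x from -2 to 2 of x^{n+1} / (2π √(4 - x²)) dx. -/
open Real MeasureTheory Set intervalIntegral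

lemma img_sin : (fun θ : ℝ => 2 * Real.sin θ) '' Set.Ioo (-(Real.pi/2)) (Real.pi/2)
    = Set.Ioo (-2 : ℝ) 2 := by
  ext x
  constructor
  · rintro ⟨θ, hθ, rfl⟩
    have h1 : Real.sin θ < Real.sin (Real.pi/2) :=
      Real.strictMonoOn_sin ⟨by linarith [hθ.1], le_of_lt hθ.2⟩
        ⟨by linarith [Real.pi_pos], le_refl _⟩ hθ.2
    have h2 : Real.sin (-(Real.pi/2)) < Real.sin θ :=
      Real.strictMonoOn_sin ⟨le_refl _, by linarith [Real.pi_pos]⟩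
        ⟨le_of_lt hθ.1, le_of_lt hθ.2⟩ hθ.1
    simp [Real.sin_pi_div_two] at h1 h2
    exact ⟨by dsimp only; linarith, by dsimp only; linarith⟩
  · rintro ⟨h1, h2⟩
    refine ⟨Real.arcsin (x/2), ⟨?_, ?_⟩, ?_⟩
    · exact Real.neg_pi_div_two_lt_arcsin.mpr (by linarith)
    · exact Real.arcsin_lt_pi_div_two.mpr (by linarith)
    · show 2 * Real.sin (Real.arcsin (x/2)) = x
      rw [Real.sin_arcsin (by linarith) (by linarith)]; ring

lemma subst_lemma (k : ℕ) :
    (∫ x in (-2:ℝ)..2, x ^ k / (2 * Real.pi * Real.sqrt (4 - x ^ 2))) =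
    ∫ θ in (-(Real.pi/2))..(Real.pi/2), (2 * Real.sin θ) ^ k / (2 * Real.pi) := by
  have hpi := Real.pi_pos
  rw [intervalIntegral.integral_of_le (by norm_num : (-2:ℝ) ≤ 2),
    intervalIntegral.integral_of_le (by linarith : -(Real.pi/2) ≤ Real.pi/2),
    MeasureTheory.integral_Ioc_eq_integral_Ioo, MeasureTheory.integral_Ioc_eq_integral_Ioo,
    ← img_sin,
    MeasureTheory.integral_image_eq_integral_abs_deriv_smul measurableSet_Ioo
      (f' := fun θ => 2 * Real.cos θ)
      (fun θ _ => ((Real.hasDerivAt_sin θ).const_mul 2).hasDerivWithinAt)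
      (fun a ha b hb h => Real.injOn_sin (Set.Ioo_subset_Icc_self ha)
        (Set.Ioo_subset_Icc_self hb) (by linarith))]
  refine MeasureTheory.setIntegral_congr_fun measurableSet_Ioo (fun θ hθ => ?_)
  have hc : 0 < Real.cos θ := Real.cos_pos_of_mem_Ioo hθ
  have hs : Real.sqrt (4 - (2 * Real.sin θ) ^ 2) = 2 * Real.cos θ := by
    have h4 : 4 - (2 * Real.sin θ) ^ 2 = (2 * Real.cos θ) ^ 2 := by
      have := Real.sin_sq_add_cos_sq θ; nlinarith
    rw [h4, Real.sqrt_sq (by linarith)]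
  rw [hs, abs_of_pos (by linarith), smul_eq_mul]
  field_simp

lemma sin_pow_sym (k : ℕ) :
    (∫ θ in (0:ℝ)..(Real.pi/2), Real.sin θ ^ k) = ∫ θ in (Real.pi/2)..Real.pi, Real.sin θ ^ k := by
  have := intervalIntegral.integral_comp_sub_left (a := (0:ℝ)) (b := Real.pi/2)
    (fun x => Real.sin x ^ k) Real.pi
  simp only [Real.sin_pi_sub, sub_zero] at this
  have hb : Real.pi - Real.pi/2 = Real.pi/2 := by ring
  rw [hb] at this
  exact this

lemma sin_pow_even_int (m : ℕ) :
    (∫ θ in (-(Real.pi/2))..(Real.pi/2), Real.sin θ ^ (2*m)) =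
      Real.pi * ∏ i ∈ Finset.range m, (2 * (i:ℝ) + 1) / (2 * i + 2) := by
  have hneg : (∫ θ in (-(Real.pi/2))..(0:ℝ), Real.sin θ ^ (2*m)) =
      ∫ θ in (0:ℝ)..(Real.pi/2), Real.sin θ ^ (2*m) := by
    have := intervalIntegral.integral_comp_neg (a := (0:ℝ)) (b := Real.pi/2)
      (fun x => Real.sin x ^ (2*m))
    simp only [Real.sin_neg, Even.neg_pow (even_two_mul m), neg_zero] at this
    rw [← this]
  have hi : ∀ a b : ℝ, IntervalIntegrable (fun θ => Real.sin θ ^ (2*m)) volume a b :=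
    fun a b => (Real.continuous_sin.pow _).intervalIntegrable a b
  have split1 : (∫ θ in (-(Real.pi/2))..(Real.pi/2), Real.sin θ ^ (2*m)) =
      (∫ θ in (-(Real.pi/2))..(0:ℝ), Real.sin θ ^ (2*m)) +
      ∫ θ in (0:ℝ)..(Real.pi/2), Real.sin θ ^ (2*m) :=
    (intervalIntegral.integral_add_adjacent_intervals (hi _ _) (hi _ _)).symm
  have split2 : (∫ θ in (0:ℝ)..Real.pi, Real.sin θ ^ (2*m)) =
      (∫ θ in (0:ℝ)..(Real.pi/2), Real.sin θ ^ (2*m)) +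
      ∫ θ in (Real.pi/2)..Real.pi, Real.sin θ ^ (2*m) :=
    (intervalIntegral.integral_add_adjacent_intervals (hi _ _) (hi _ _)).symm
  rw [split1, hneg]
  nth_rewrite 2 [sin_pow_sym]
  rw [← split2, integral_sin_pow_even]

lemma sin_pow_odd_int (m : ℕ) :
    (∫ θ in (-(Real.pi/2))..(Real.pi/2), Real.sin θ ^ (2*m+1)) = 0 := by
  have hneg : (∫ θ in (-(Real.pi/2))..(0:ℝ), Real.sin θ ^ (2*m+1)) =
      - ∫ θ in (0:ℝ)..(Real.pi/2), Real.sin θ ^ (2*m+1) := by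
    have := intervalIntegral.integral_comp_neg (a := (0:ℝ)) (b := Real.pi/2)
      (fun x => Real.sin x ^ (2*m+1))
    simp only [Real.sin_neg, Odd.neg_pow (odd_two_mul_add_one m), neg_zero,
      intervalIntegral.integral_neg] at this
    linarith [this]
  have hi : ∀ a b : ℝ, IntervalIntegrable (fun θ => Real.sin θ ^ (2*m+1)) volume a b :=
    fun a b => (Real.continuous_sin.pow _).intervalIntegrable a b
  have split1 : (∫ θ in (-(Real.pi/2))..(Real.pi/2), Real.sin θ ^ (2*m+1)) =
      (∫ θ in (-(Real.pi/2))..(0:ℝ), Real.sin θ ^ (2*m+1)) +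
      ∫ θ in (0:ℝ)..(Real.pi/2), Real.sin θ ^ (2*m+1) :=
    (intervalIntegral.integral_add_adjacent_intervals (hi _ _) (hi _ _)).symm
  rw [split1, hneg]; ring

lemma prod_central (m : ℕ) :
    (∏ i ∈ Finset.range m, (2 * (i:ℝ) + 1) / (2 * i + 2)) = (Nat.centralBinom m : ℝ) / 4 ^ m := by
  induction m with
  | zero => simp [Nat.centralBinom]
  | succ k ih =>
    rw [Finset.prod_range_succ, ih]
    have h : ((k:ℝ) + 1) * (Nat.centralBinom (k+1) : ℝ) =
        2 * (2 * k + 1) * (Nat.centralBinom k : ℝ) := by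
      exact_mod_cast congrArg (Nat.cast : ℕ → ℝ) (Nat.succ_mul_centralBinom_succ k)
    have h4 : (4:ℝ) ^ (k+1) = 4 * 4 ^ k := by ring
    have h4k : (4:ℝ) ^ k ≠ 0 := by positivity
    field_simp
    linear_combination (-2) * (4:ℝ) ^ k * h

theorem binom_succ_half_integral (n : ℕ) :
    (if Odd n then ((n.choose ((n + 1) / 2) : ℝ)) else 0) =
      ∫ x in (-2 : ℝ)..2, x ^ (n + 1) / (2 * Real.pi * Real.sqrt (4 - x ^ 2)) := by
  have hpi := Real.pi_pos
  rw [subst_lemma (n+1)]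
  have hconst : (∫ θ in (-(Real.pi/2))..(Real.pi/2), (2 * Real.sin θ) ^ (n+1) / (2*Real.pi)) =
      (2^(n+1)/(2*Real.pi)) * ∫ θ in (-(Real.pi/2))..(Real.pi/2), Real.sin θ ^ (n+1) := by
    rw [← intervalIntegral.integral_const_mul]
    apply intervalIntegral.integral_congr
    intro θ _
    dsimp only
    rw [mul_pow]; ring
  rw [hconst]
  rcases Nat.even_or_odd n with he | ho
  · rw [if_neg (by simpa using he)]
    obtain ⟨k, rfl⟩ := he
    have h1 : k + k + 1 = 2*k + 1 := by ring
    rw [h1, sin_pow_odd_int k, mul_zero]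
  · rw [if_pos ho]
    obtain ⟨k, rfl⟩ := ho
    have h1 : 2*k + 1 + 1 = 2*(k+1) := by ring
    rw [h1, sin_pow_even_int (k+1), prod_central (k+1)]
    have h2 : 2*(k+1)/2 = k + 1 := by omega
    rw [h2]
    have hchoose : 2 * Nat.choose (2*k+1) (k+1) = Nat.centralBinom (k+1) := by
      rw [Nat.centralBinom, show 2*(k+1) = (2*k+1)+1 from by ring, Nat.choose_succ_succ (2*k+1) k]
      have h3 := Nat.choose_symm (show k+1 ≤ 2*k+1 by omega)
      rw [show (2*k+1) - (k+1) = k from by omega] at h3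
      simp only [Nat.succ_eq_add_one]
      omega
    have hcast : (Nat.centralBinom (k+1) : ℝ) = 2 * (Nat.choose (2*k+1) (k+1) : ℝ) := by
      exact_mod_cast (congrArg (Nat.cast : ℕ → ℝ) hchoose).symm
    rw [hcast]
    have h4 : (2:ℝ)^(2*(k+1)) = 4^(k+1) := by rw [pow_mul]; norm_num
    rw [h4]
    have h5 : (4:ℝ)^(k+1) ≠ 0 := by positivity
    field_simp
end

section
/- With g_α(x) = Σ_{n≥0} C(n,(n+α)/2) x^n as formal power series, whenever α, β, γ, δ are nonnegative integers with α + β = γ + δ, we have g_α(x)·g_β(x) = g_γ(x)·g_δ(x). -/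
open PowerSeries

/-- `C(n, (n+α)/2)`, taken to be `0` when `(n+α)/2` is not an integer. -/
def hb (n α : ℕ) : ℚ := if (n + α) % 2 = 0 then (n.choose ((n + α) / 2) : ℚ) else 0

/-- The formal power series `g_α(x) = Σ_{n≥0} C(n, (n+α)/2) xⁿ`. -/
def g (α : ℕ) : PowerSeries ℚ := PowerSeries.mk fun n => hb n α

/-!
Pascal's rule gives `g (α + 1) = X * (g α + g (α + 2))`, and since `X` is cancellable, a sequence
of power series obeying this recurrence is determined by its first two terms. Both `β ↦ g α * g β`
and `β ↦ g 0 * g (α + β)` obey it, so `g α * g β = g 0 * g (α + β)` reduces to `β = 1`, and in the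
same way to the single identity `g 1 ^ 2 = g 0 * g 2`. Since `g 0 = 1 + 2 X g 1`, that identity is
equivalent to `g 0 ^ 2 * (1 - 4 X²) = 1`, i.e. `g 0 = Σ C(2m, m) X^{2m} = (1 - 4 X²)^{-1/2}`, which
follows from the differential equation `(1 - 4 X²) g 0' = 4 X g 0`.
-/

lemma hb_zero_succ (α : ℕ) : hb 0 (α + 1) = 0 := by
  unfold hb
  split_ifs
  · rw [Nat.choose_eq_zero_of_lt (by omega), Nat.cast_zero]
  · rfl

lemma hb_succ_succ (n α : ℕ) : hb (n + 1) (α + 1) = hb n α + hb n (α + 2) := by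
  unfold hb
  rcases Nat.even_or_odd (n + α) with ⟨k, hk⟩ | ⟨k, hk⟩
  · rw [if_pos (by omega), if_pos (by omega), if_pos (by omega),
      show (n + 1 + (α + 1)) / 2 = k + 1 by omega, show (n + α) / 2 = k by omega,
      show (n + (α + 2)) / 2 = k + 1 by omega, Nat.choose_succ_succ, Nat.cast_add]
  · rw [if_neg (by omega), if_neg (by omega), if_neg (by omega), add_zero]

lemma hb_succ_zero (n : ℕ) : hb (n + 1) 0 = 2 * hb n 1 := by
  unfold hb
  rcases Nat.even_or_odd n with ⟨k, hk⟩ | ⟨k, hk⟩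
  · rw [if_neg (by omega), if_neg (by omega), mul_zero]
  · subst hk
    rw [if_pos (by omega), if_pos (by omega), show (2 * k + 1 + 1 + 0) / 2 = k + 1 by omega,
      Nat.choose_succ_succ, ← Nat.choose_symm_half, Nat.cast_add, Nat.succ_eq_add_one]
    ring

lemma hb_add_two_zero (n : ℕ) : (n + 2) * hb (n + 2) 0 = 4 * (n + 1) * hb n 0 := by
  unfold hb
  rcases Nat.even_or_odd n with ⟨k, hk⟩ | ⟨k, hk⟩
  · subst hk
    rw [if_pos (by omega), if_pos (by omega), show (k + k + 2 + 0) / 2 = k + 1 by omega,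
      show (k + k + 0) / 2 = k by omega, show k + k + 2 = 2 * (k + 1) by ring, ← two_mul,
      ← Nat.centralBinom_eq_two_mul_choose, ← Nat.centralBinom_eq_two_mul_choose]
    have h := congrArg (Nat.cast : ℕ → ℚ) (Nat.succ_mul_centralBinom_succ k)
    push_cast at h ⊢
    linear_combination 2 * h
  · rw [if_neg (by omega), if_neg (by omega)]
    ring

lemma g_succ (α : ℕ) : g (α + 1) = X * (g α + g (α + 2)) := by
  ext (_ | n)
  · simp [g, hb_zero_succ]
  · simp [g, hb_succ_succ]

lemma g_zero : g 0 = 1 + X * (g 1 + g 1) := by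
  ext (_ | n)
  · simp [g, hb]
  · simp [g, hb_succ_zero, two_mul, coeff_one]

lemma one_sub_mul_derivative_g_zero : (1 - 4 * X ^ 2) * d⁄dX ℚ (g 0) = 4 * X * g 0 := by
  rw [← map_ofNat C 4]
  ext (_ | _ | n)
  · simpa [g, hb] using constantCoeff_iterate_derivative (g 0) 1
  · norm_num [g, coeff_derivative, sub_mul, mul_assoc, coeff_X_pow_mul', hb]
  · simp only [g, sub_mul, one_mul, mul_assoc, map_sub, coeff_derivative, coeff_mk, Nat.cast_add,
      Nat.cast_one, coeff_C_mul, coeff_X_pow_mul', le_add_iff_nonneg_left, zero_le, ↓reduceIte,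
      Nat.reduceSubDiff, coeff_succ_X_mul]
    have h := hb_add_two_zero (n + 1)
    push_cast at h
    linear_combination h

lemma g_zero_sq_mul : g 0 ^ 2 * (1 - 4 * X ^ 2) = 1 := by
  apply derivative.ext
  · rw [← map_ofNat C 4]
    simp only [Derivation.leibniz, Derivation.leibniz_pow, map_sub, Derivation.map_one_eq_zero,
      derivative_C, derivative_X, smul_eq_mul, nsmul_eq_mul]
    rw [map_ofNat]
    linear_combination (2 * g 0) * one_sub_mul_derivative_g_zero
  · simp [g, hb]

lemma g_one_mul_self : g 1 * g 1 = g 0 * g 2 := by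
  have h4 : (4 : ℚ⟦X⟧) ≠ 0 := by
    rw [← map_ofNat C 4, ← map_zero C, C_injective.ne_iff]
    norm_num
  refine mul_left_cancel₀ (mul_ne_zero h4 (pow_ne_zero 2 X_ne_zero)) ?_
  linear_combination (4 * X * g 0) * g_succ 0 + (g 0 + 1 - 2 * X * g 1) * g_zero - g_zero_sq_mul

theorem seq_eq_of_recurrence {A : Type*} [Ring A] {x : A} (hx : IsLeftRegular x)
    {u v : ℕ → A} (hu : ∀ n, u (n + 1) = x * (u n + u (n + 2)))
    (hv : ∀ n, v (n + 1) = x * (v n + v (n + 2))) (h0 : u 0 = v 0) (h1 : u 1 = v 1) :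
    u = v := by
  have h : ∀ n, u n = v n ∧ u (n + 1) = v (n + 1) := by
    intro n
    induction n with
    | zero => exact ⟨h0, h1⟩
    | succ n ih =>
      refine ⟨ih.2, hx ?_⟩
      calc x * u (n + 2) = u (n + 1) - x * u n := by rw [hu n, mul_add, add_sub_cancel_left]
        _ = v (n + 1) - x * v n := by rw [ih.1, ih.2]
        _ = x * v (n + 2) := by rw [hv n, mul_add, add_sub_cancel_left]
  exact funext fun n => (h n).1

lemma g_one_mul (β : ℕ) : g 1 * g β = g 0 * g (β + 1) := by
  refine congrFun (seq_eq_of_recurrence X_mul_injective (u := fun β => g 1 * g β)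
    (v := fun β => g 0 * g (β + 1)) (fun n => ?_) (fun n => ?_) (mul_comm _ _) g_one_mul_self) β
  · rw [g_succ n]
    ring
  · rw [show n + 2 + 1 = n + 1 + 2 from rfl, g_succ (n + 1)]
    ring

lemma g_mul (α β : ℕ) : g α * g β = g 0 * g (α + β) := by
  refine congrFun (seq_eq_of_recurrence X_mul_injective (u := fun β => g α * g β)
    (v := fun β => g 0 * g (α + β)) (fun n => ?_) (fun n => ?_) (mul_comm _ _) ?_) β
  · rw [g_succ n]
    ring
  · rw [← add_assoc, ← add_assoc, g_succ (α + n)]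
    ring
  · rw [mul_comm, g_one_mul]

theorem g_mul_depends_only_on_sum (α β γ δ : ℕ) (h : α + β = γ + δ) :
    g α * g β = g γ * g δ := by
  rw [g_mul α β, g_mul γ δ, h]
end

section
/- Let C^n_δ = Σ_{k=0}^{n} C(k, k/2)·C(n-k, (n-k+δ)/2). Then C^n_1 = 0 if n is even, and C^n_1 = 2^n − (1/2)·C(n+1, (n+1)/2) if n is odd. -/
/-- `C^n_δ = Σ_{k=0}^{n} C(k, k/2)·C(n-k, (n-k+δ)/2)`. -/
def Cd (n δ : ℕ) : ℚ := ∑ k ∈ Finset.range (n + 1), hb k 0 * hb (n - k) δ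

/-- central binomial coefficient as a rational -/
def cb (i : ℕ) : ℚ := ((2 * i).choose i : ℚ)

lemma cb_succ (i : ℕ) : ((i : ℚ) + 1) * cb (i + 1) = 2 * (2 * (i : ℚ) + 1) * cb i := by
  have h := Nat.succ_mul_centralBinom_succ i
  rw [Nat.centralBinom_eq_two_mul_choose, Nat.centralBinom_eq_two_mul_choose] at h
  unfold cb
  exact_mod_cast h

lemma refl_sum (m : ℕ) (f : ℕ → ℕ → ℚ) :
    ∑ i ∈ Finset.range (m + 1), f (m - i) i = ∑ i ∈ Finset.range (m + 1), f i (m - i) := by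
  have h := Finset.sum_range_reflect (fun j => f j (m - j)) (m + 1)
  rw [← h]
  refine Finset.sum_congr rfl fun i hi => ?_
  simp only [Finset.mem_range] at hi
  have h1 : m + 1 - 1 - i = m - i := by omega
  have h2 : m - (m - i) = i := by omega
  rw [h1, h2]

lemma weighted_sum (m : ℕ) :
    ∑ i ∈ Finset.range (m + 1), ((2 * i + 1 : ℕ) : ℚ) * (cb i * cb (m - i))
      = ((m : ℚ) + 1) * ∑ i ∈ Finset.range (m + 1), cb i * cb (m - i) := by
  have hsym : ∑ i ∈ Finset.range (m + 1), ((2 * i + 1 : ℕ) : ℚ) * (cb i * cb (m - i))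
      = ∑ i ∈ Finset.range (m + 1), ((2 * (m - i) + 1 : ℕ) : ℚ) * (cb i * cb (m - i)) := by
    have h := refl_sum m (fun a b => ((2 * b + 1 : ℕ) : ℚ) * (cb a * cb b))
    calc ∑ i ∈ Finset.range (m + 1), ((2 * i + 1 : ℕ) : ℚ) * (cb i * cb (m - i))
        = ∑ i ∈ Finset.range (m + 1), ((2 * i + 1 : ℕ) : ℚ) * (cb (m - i) * cb i) := by
          refine Finset.sum_congr rfl fun i hi => by ring
      _ = ∑ i ∈ Finset.range (m + 1), ((2 * (m - i) + 1 : ℕ) : ℚ) * (cb i * cb (m - i)) := h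
  have hsum : (∑ i ∈ Finset.range (m + 1), ((2 * i + 1 : ℕ) : ℚ) * (cb i * cb (m - i)))
      + (∑ i ∈ Finset.range (m + 1), ((2 * (m - i) + 1 : ℕ) : ℚ) * (cb i * cb (m - i)))
      = (2 * (m : ℚ) + 2) * ∑ i ∈ Finset.range (m + 1), cb i * cb (m - i) := by
    rw [← Finset.sum_add_distrib, Finset.mul_sum]
    refine Finset.sum_congr rfl fun i hi => ?_
    simp only [Finset.mem_range] at hi
    have h1 : ((2 * i + 1 : ℕ) : ℚ) + ((2 * (m - i) + 1 : ℕ) : ℚ) = 2 * (m : ℚ) + 2 := by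
      have : (2 * i + 1) + (2 * (m - i) + 1) = 2 * m + 2 := by omega
      exact_mod_cast congrArg (Nat.cast : ℕ → ℚ) this
    rw [← add_mul, h1]
  nlinarith [hsum, hsym]

lemma S4 (m : ℕ) : ∑ i ∈ Finset.range (m + 1), cb i * cb (m - i) = 4 ^ m := by
  induction m with
  | zero => simp [cb]
  | succ m ih =>
    have key : ((m : ℚ) + 1) * ∑ i ∈ Finset.range (m + 2), cb i * cb (m + 1 - i)
        = 4 * (((m : ℚ) + 1) * ∑ i ∈ Finset.range (m + 1), cb i * cb (m - i)) := by
      have hsplit : ((m : ℚ) + 1) * ∑ i ∈ Finset.range (m + 2), cb i * cb (m + 1 - i)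
          = (∑ i ∈ Finset.range (m + 2), ((i : ℕ) : ℚ) * (cb i * cb (m + 1 - i)))
            + ∑ i ∈ Finset.range (m + 2), ((m + 1 - i : ℕ) : ℚ) * (cb i * cb (m + 1 - i)) := by
        rw [← Finset.sum_add_distrib, Finset.mul_sum]
        refine Finset.sum_congr rfl fun i hi => ?_
        simp only [Finset.mem_range] at hi
        have h1 : ((i : ℕ) : ℚ) + ((m + 1 - i : ℕ) : ℚ) = (m : ℚ) + 1 := by
          have : i + (m + 1 - i) = m + 1 := by omega
          exact_mod_cast congrArg (Nat.cast : ℕ → ℚ) this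
        rw [← add_mul, h1]
      have hrefl : ∑ i ∈ Finset.range (m + 2), ((m + 1 - i : ℕ) : ℚ) * (cb i * cb (m + 1 - i))
          = ∑ i ∈ Finset.range (m + 2), ((i : ℕ) : ℚ) * (cb i * cb (m + 1 - i)) := by
        have h := refl_sum (m + 1) (fun a b => ((b : ℕ) : ℚ) * (cb a * cb b))
        calc ∑ i ∈ Finset.range (m + 2), ((m + 1 - i : ℕ) : ℚ) * (cb i * cb (m + 1 - i))
            = ∑ i ∈ Finset.range (m + 2), ((m + 1 - i : ℕ) : ℚ) * (cb (m + 1 - i) * cb i) := by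
              refine Finset.sum_congr rfl fun i hi => by ring
          _ = ∑ i ∈ Finset.range (m + 2), ((i : ℕ) : ℚ) * (cb i * cb (m + 1 - i)) := by
              exact refl_sum (m + 1) (fun a b => ((a : ℕ) : ℚ) * (cb a * cb b))
      have hshift : ∑ i ∈ Finset.range (m + 2), ((i : ℕ) : ℚ) * (cb i * cb (m + 1 - i))
          = ∑ i ∈ Finset.range (m + 1), (((i : ℚ) + 1)) * (cb (i + 1) * cb (m - i)) := by
        rw [Finset.sum_range_succ']
        simp only [Nat.cast_zero, zero_mul, add_zero, Nat.cast_add, Nat.cast_one,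
          Nat.succ_sub_succ]
      have hrec : ∑ i ∈ Finset.range (m + 1), (((i : ℚ) + 1)) * (cb (i + 1) * cb (m - i))
          = 2 * ∑ i ∈ Finset.range (m + 1), ((2 * i + 1 : ℕ) : ℚ) * (cb i * cb (m - i)) := by
        rw [Finset.mul_sum]
        refine Finset.sum_congr rfl fun i hi => ?_
        push_cast
        linear_combination cb (m - i) * cb_succ i
      rw [hsplit, hrefl, hshift, hrec, weighted_sum m]
      ring
    have hne : ((m : ℚ) + 1) ≠ 0 := by positivity
    have h4 : ∑ i ∈ Finset.range (m + 2), cb i * cb (m + 1 - i)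
        = 4 * ∑ i ∈ Finset.range (m + 1), cb i * cb (m - i) :=
      mul_left_cancel₀ hne (by rw [key]; ring)
    show ∑ i ∈ Finset.range (m + 2), cb i * cb (m + 1 - i) = 4 ^ (m + 1)
    rw [h4, ih]
    ring

lemma sum_pair (f : ℕ → ℚ) (m : ℕ) :
    ∑ k ∈ Finset.range (2 * m), f k = ∑ i ∈ Finset.range m, (f (2 * i) + f (2 * i + 1)) := by
  induction m with
  | zero => simp
  | succ m ih =>
    have h : 2 * (m + 1) = 2 * m + 1 + 1 := by ring
    rw [h, Finset.sum_range_succ, Finset.sum_range_succ, Finset.sum_range_succ, ih]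
    ring

theorem Cd_one (n : ℕ) :
    Cd n 1 = if Even n then 0
      else (2 : ℚ) ^ n - (1 / 2) * ((n + 1).choose ((n + 1) / 2) : ℚ) := by
  rcases Nat.even_or_odd n with he | ho
  · rw [if_pos he]
    unfold Cd
    apply Finset.sum_eq_zero
    intro k hk
    simp only [Finset.mem_range] at hk
    rw [Nat.even_iff] at he
    unfold hb
    rcases Nat.even_or_odd k with hek | hok
    · rw [Nat.even_iff] at hek
      have h1 : ¬ (n - k + 1) % 2 = 0 := by omega
      rw [if_neg h1, mul_zero]
    · rw [Nat.odd_iff] at hok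
      have h1 : ¬ (k + 0) % 2 = 0 := by omega
      rw [if_neg h1, zero_mul]
  · have hne : ¬ Even n := by rw [Nat.even_iff]; rw [Nat.odd_iff] at ho; omega
    rw [if_neg hne]
    obtain ⟨m, hm⟩ := ho
    subst hm
    unfold Cd
    have h2 : 2 * m + 1 + 1 = 2 * (m + 1) := by ring
    rw [h2, sum_pair]
    have hterm : ∀ i ∈ Finset.range (m + 1),
        hb (2 * i) 0 * hb (2 * m + 1 - 2 * i) 1 + hb (2 * i + 1) 0 * hb (2 * m + 1 - (2 * i + 1)) 1
          = (1 / 2) * (cb i * cb (m - i + 1)) := by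
      intro i hi
      simp only [Finset.mem_range] at hi
      have hi' : i ≤ m := by omega
      have e1 : hb (2 * i + 1) 0 = 0 := by
        unfold hb
        have : (2 * i + 1 + 0) % 2 = 1 := by omega
        simp [this]
      have e2 : hb (2 * i) 0 = cb i := by
        unfold hb cb
        have ha : (2 * i + 0) % 2 = 0 := by omega
        have hb' : (2 * i + 0) / 2 = i := by omega
        rw [ha, hb']
        simp
      have e3 : 2 * m + 1 - 2 * i = 2 * (m - i) + 1 := by omega
      have e4 : hb (2 * (m - i) + 1) 1 = (((2 * (m - i) + 1).choose (m - i + 1)) : ℚ) := by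
        unfold hb
        have ha : (2 * (m - i) + 1 + 1) % 2 = 0 := by omega
        have hb' : (2 * (m - i) + 1 + 1) / 2 = m - i + 1 := by omega
        rw [ha, hb']
        simp
      have e5 : (((2 * (m - i) + 1).choose (m - i + 1)) : ℚ) = (1 / 2) * cb (m - i + 1) := by
        set j := m - i with hj
        have hsymm : (2 * j + 1).choose j = (2 * j + 1).choose (j + 1) := by
          have h := Nat.choose_symm (by omega : j + 1 ≤ 2 * j + 1)
          have h' : 2 * j + 1 - (j + 1) = j := by omega
          rw [h'] at h
          exact h
        have hnat : (2 * (j + 1)).choose (j + 1) = 2 * ((2 * j + 1).choose (j + 1)) := by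
          have h22 : 2 * (j + 1) = 2 * j + 1 + 1 := by ring
          have hp : (2 * j + 1 + 1).choose (j + 1)
              = (2 * j + 1).choose j + (2 * j + 1).choose (j + 1) :=
            Nat.choose_succ_succ (2 * j + 1) j
          rw [h22, hp, hsymm]
          ring
        unfold cb
        have := congrArg (Nat.cast : ℕ → ℚ) hnat
        push_cast at this
        linarith
      rw [e1, e2, e3, e4, e5]
      ring
    rw [Finset.sum_congr rfl hterm]
    have hS : ∑ i ∈ Finset.range (m + 1), cb i * cb (m - i + 1)
        = 4 ^ (m + 1) - cb (m + 1) := by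
      have h := S4 (m + 1)
      rw [Finset.sum_range_succ] at h
      have hc0 : cb 0 = 1 := by simp [cb]
      have h3 : ∑ i ∈ Finset.range (m + 1), cb i * cb (m + 1 - i)
          = ∑ i ∈ Finset.range (m + 1), cb i * cb (m - i + 1) := by
        refine Finset.sum_congr rfl fun i hi => ?_
        simp only [Finset.mem_range] at hi
        have : m + 1 - i = m - i + 1 := by omega
        rw [this]
      rw [Nat.sub_self, hc0, mul_one, h3] at h
      linarith
    rw [← Finset.mul_sum, hS]
    have hch : 2 * (m + 1) / 2 = m + 1 := by omega
    rw [hch]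
    unfold cb
    have h4 : (4 : ℚ) ^ (m + 1) = 2 * 2 ^ (2 * m + 1) := by
      rw [show (4 : ℚ) = 2 ^ 2 by norm_num, ← pow_mul]
      rw [show 2 * (m + 1) = (2 * m + 1) + 1 by ring, pow_succ]
      ring
    rw [h4]
    ring
end

section
/- Let C^n_δ = Σ_{k=0}^{n} C(k, k/2)·C(n-k, (n-k+δ)/2). Then for all nonnegative integers n and δ, C^n_δ + C^n_{δ+2} = C^{n+1}_{δ+1}. -/
lemma hb_step (m δ : ℕ) : hb m δ + hb m (δ + 2) = hb (m + 1) (δ + 1) := by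
  unfold hb
  have h2 : (m + (δ + 2)) % 2 = (m + δ) % 2 := by omega
  have h1 : (m + 1 + (δ + 1)) % 2 = (m + δ) % 2 := by omega
  rcases Nat.even_or_odd (m + δ) with h | h
  · have he : (m + δ) % 2 = 0 := Nat.even_iff.mp h
    rw [h1, h2, he]
    simp only [if_pos rfl]
    have e1 : (m + (δ + 2)) / 2 = (m + δ) / 2 + 1 := by omega
    have e2 : (m + 1 + (δ + 1)) / 2 = (m + δ) / 2 + 1 := by omega
    rw [e1, e2, Nat.choose_succ_succ]
    push_cast
    ring
  · have he : (m + δ) % 2 = 1 := Nat.odd_iff.mp h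
    rw [h1, h2, he]
    norm_num

lemma hb_zero (δ : ℕ) : hb 0 (δ + 1) = 0 := by
  unfold hb
  split
  · next h =>
    rw [Nat.choose_eq_zero_of_lt (by omega)]
    simp
  · rfl

theorem Cd_recursion (n δ : ℕ) : Cd n δ + Cd n (δ + 2) = Cd (n + 1) (δ + 1) := by
  unfold Cd
  rw [Finset.sum_range_succ (n := n + 1)]
  have hnn : n + 1 - (n + 1) = 0 := by omega
  rw [hnn, hb_zero, mul_zero, add_zero, ← Finset.sum_add_distrib]
  apply Finset.sum_congr rfl
  intro k hk
  have hk' : k ≤ n := by simpa using Nat.lt_succ_iff.mp (Finset.mem_range.mp hk)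
  have : n + 1 - k = (n - k) + 1 := by omega
  rw [this, ← hb_step, mul_add]
end

section
/- For the Wigner semicircle density ρ(E) = √(4−E²)/(2π) on [−2,2], the functions a(x) = 0 and b(x) = √(1−x) for x ∈ [0,1] solve the integral equation ρ(E) = ∫₀¹ dx · H(4b(x)² − (E−a(x))²) / (π √(4b(x)² − (E−a(x))²)), where H is the Heaviside step function. -/
/-- Heaviside step function: `1` for positive arguments, `0` otherwise. -/
noncomputable def Heaviside (t : ℝ) : ℝ := if 0 < t then 1 else 0

/-! Since `√(1 - x)² = 1 - x`, the integrand is `(π √(4 - E² - 4x))⁻¹`, the Heaviside factor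
merely cutting it off where the radicand is nonpositive. The substitution `u = 4 - E² - 4x`
turns the integral into `(4π)⁻¹ ∫_{-E²}^{4-E²} u₊^(-1/2) du = (4π)⁻¹ · 2√(4 - E²)`. -/

open Real Set intervalIntegral

-- For `u ≤ 0` both sides are junk zeros: `√u = 0` and `0⁻¹ = 0`.
lemma heaviside_div_mul_sqrt (c u : ℝ) : Heaviside u / (c * √u) = (c * √u)⁻¹ := by
  unfold Heaviside
  split_ifs with hu
  · exact one_div _
  · simp [sqrt_eq_zero_of_nonpos (not_lt.mp hu)]

lemma inv_sqrt_eq_rpow {u : ℝ} (hu : 0 ≤ u) : (√u)⁻¹ = u ^ (-(1 / 2) : ℝ) := by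
  rw [sqrt_eq_rpow, rpow_neg hu]

lemma integral_inv_sqrt {c : ℝ} (hc : 0 ≤ c) : ∫ u in (0 : ℝ)..c, (√u)⁻¹ = 2 * √c := by
  rw [integral_congr fun u hu => inv_sqrt_eq_rpow (uIcc_of_le hc ▸ hu).1,
    integral_rpow (Or.inl (by norm_num)), sqrt_eq_rpow]
  norm_num
  ring

lemma intervalIntegrable_inv_sqrt (a b : ℝ) :
    IntervalIntegrable (fun u => (√u)⁻¹) MeasureTheory.volume a b := by
  suffices h : ∀ c, IntervalIntegrable (fun u => (√u)⁻¹) MeasureTheory.volume 0 c from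
    (h a).symm.trans (h b)
  intro c
  rcases le_total 0 c with hc | hc
  · refine (intervalIntegrable_rpow' (r := -(1 / 2)) (by norm_num)).congr_uIoo fun u hu => ?_
    rw [uIoo_of_le hc] at hu
    exact (inv_sqrt_eq_rpow hu.1.le).symm
  · refine intervalIntegrable_const (c := (0 : ℝ)) |>.congr_uIoo fun u hu => ?_
    rw [uIoo_of_ge hc] at hu
    simp [sqrt_eq_zero_of_nonpos hu.2.le]

lemma integral_inv_sqrt_of_nonpos {a c : ℝ} (ha : a ≤ 0) (hc : 0 ≤ c) :
    ∫ u in a..c, (√u)⁻¹ = 2 * √c := by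
  have h_neg : ∫ u in a..0, (√u)⁻¹ = 0 := by
    rw [integral_congr (g := fun _ => 0) fun u hu => ?_, integral_zero]
    rw [uIcc_of_le ha] at hu
    simp [sqrt_eq_zero_of_nonpos hu.2]
  rw [← integral_add_adjacent_intervals (intervalIntegrable_inv_sqrt a 0)
    (intervalIntegrable_inv_sqrt 0 c), h_neg, zero_add, integral_inv_sqrt hc]

lemma integral_inv_sqrt_sub_mul {k c : ℝ} (hk : k ≠ 0) (hc : 0 ≤ c) (hck : c ≤ k) :
    ∫ x in (0 : ℝ)..1, (√(c - k * x))⁻¹ = 2 * √c / k := by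
  rw [integral_comp_sub_mul (fun u => (√u)⁻¹) hk, mul_one, mul_zero, sub_zero,
    integral_inv_sqrt_of_nonpos (by linarith) hc, smul_eq_mul, inv_mul_eq_div]

/-- `a(x) = 0`, `b(x) = √(1−x)` solve the integral equation relating the Lanczos
coefficients to the Wigner semicircle density `ρ(E) = √(4−E²)/(2π)`. -/
theorem semicircle_integral_equation (E : ℝ) (hE : |E| ≤ 2) :
    (∫ x in (0 : ℝ)..1,
        Heaviside (4 * Real.sqrt (1 - x) ^ 2 - (E - 0) ^ 2) /
          (Real.pi * Real.sqrt (4 * Real.sqrt (1 - x) ^ 2 - (E - 0) ^ 2))) =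
      Real.sqrt (4 - E ^ 2) / (2 * Real.pi) := by
  have hE2 : E ^ 2 ≤ 4 := by nlinarith [sq_abs E, abs_nonneg E]
  have h_integrand : EqOn
      (fun x => Heaviside (4 * √(1 - x) ^ 2 - (E - 0) ^ 2) /
        (π * √(4 * √(1 - x) ^ 2 - (E - 0) ^ 2)))
      (fun x => π⁻¹ * (√((4 - E ^ 2) - 4 * x))⁻¹) (uIcc 0 1) := by
    intro x hx
    rw [uIcc_of_le zero_le_one] at hx
    simp only [heaviside_div_mul_sqrt, sq_sqrt (sub_nonneg.mpr hx.2), mul_inv, sub_zero]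
    ring_nf
  rw [integral_congr h_integrand, integral_const_mul,
    integral_inv_sqrt_sub_mul four_ne_zero (by linarith) (by nlinarith [sq_nonneg E])]
  field_simp
  ring
end
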